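/- arXiv:2511.00583 — 5 statements merged into one kernel-verified Lean document; each statement's English description precedes it below -/
import Mathlib

section
/- With g, h, k₁, k₂ and f as defined, one has the identity of polynomials in ℤ[z,w]: Res_y( Res_x( g(x,y), h(x,z) ), h(y,w) ) = − k₁(z,w) · k₂(z,w) · f(z,w), where the inner resultant is taken with respect to x (g having degree 3 and h(x,z) degree 1 in x) and the outer resultant with respect to y (h(y,w) having degree 1 in y). -/
open Polynomial

/-!
Both `h(x,z)` and `h(y,w)` are linear in the eliminated variable, so each resultant is a
cubic evaluated, homogeneously, at the root of a linear polynomial: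
`Res(a₃X³ + a₂X² + a₁X + a₀, b₁X + b₀) = a₃b₀³ - a₂b₀²b₁ + a₁b₀b₁² - a₀b₁³`.
Applying this twice turns the claim into a polynomial identity in `z` and `w`.
-/

/-- The Sylvester matrix of two polynomials `p`, `q` (with respect to their
natural degrees): the first `q.natDegree` rows contain the coefficients of `p`
in descending order, the remaining `p.natDegree` rows those of `q`. -/
noncomputable def sylvester {R : Type*} [CommRing R] (p q : R[X]) :
    Matrix (Fin (p.natDegree + q.natDegree)) (Fin (p.natDegree + q.natDegree)) R :=
  Matrix.of fun i j =>
    if (i : ℕ) < q.natDegree then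
      (if (i : ℕ) ≤ (j : ℕ) ∧ (j : ℕ) ≤ p.natDegree + (i : ℕ) then
        p.coeff (p.natDegree + (i : ℕ) - (j : ℕ)) else 0)
    else
      (if (i : ℕ) - q.natDegree ≤ (j : ℕ) ∧ (j : ℕ) ≤ q.natDegree + ((i : ℕ) - q.natDegree) then
        q.coeff (q.natDegree + ((i : ℕ) - q.natDegree) - (j : ℕ)) else 0)

/-- The resultant of two polynomials, i.e. the determinant of their Sylvester matrix. -/
noncomputable def resultant {R : Type*} [CommRing R] (p q : R[X]) : R :=
  (_root_.sylvester p q).det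

/-- `f(z,w) = w³ + (−z³+6z²−6z−1)w² + (z³−3z²+3z+1)w − z³`. -/
def fpoly {R : Type*} [CommRing R] (z w : R) : R :=
  w ^ 3 + (-z ^ 3 + 6 * z ^ 2 - 6 * z - 1) * w ^ 2 + (z ^ 3 - 3 * z ^ 2 + 3 * z + 1) * w - z ^ 3

/-- `g(x,y) = (y²+3y+9)x³ − (y+6)³`. -/
def gpoly {R : Type*} [CommRing R] (x y : R) : R :=
  (y ^ 2 + 3 * y + 9) * x ^ 3 - (y + 6) ^ 3

/-- `h(x,z) = z³ − (3+x)z² + zx + 1`. -/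
def hpoly {R : Type*} [CommRing R] (x z : R) : R :=
  z ^ 3 - (3 + x) * z ^ 2 + z * x + 1

/-- `k₁(z,w)`. -/
def k1poly {R : Type*} [CommRing R] (z w : R) : R :=
  w ^ 3 * z ^ 3 - 2 * w ^ 2 * z ^ 3 - 3 * w ^ 2 * z ^ 2 + 2 * w * z ^ 3 + 3 * w ^ 2 * z - z ^ 3
    + w ^ 2 + 3 * z ^ 2 - w - 3 * z + 1

/-- `k₂(z,w)`. -/
def k2poly {R : Type*} [CommRing R] (z w : R) : R :=
  w ^ 3 * z ^ 3 - 3 * w ^ 3 * z ^ 2 - w ^ 2 * z ^ 3 + 3 * w ^ 3 * z + 9 * w ^ 2 * z ^ 2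
    + w * z ^ 3 - w ^ 3 - 9 * w ^ 2 * z - 6 * w * z ^ 2 + 2 * w ^ 2 + 6 * w * z - 2 * w + 1


theorem resultant_eq_of_natDegree_eq_three_of_natDegree_eq_one {R : Type*} [CommRing R]
    {p q : R[X]} (hp : p.natDegree = 3) (hq : q.natDegree = 1) :
    _root_.resultant p q = p.coeff 3 * q.coeff 0 ^ 3 - p.coeff 2 * q.coeff 0 ^ 2 * q.coeff 1
      + p.coeff 1 * q.coeff 0 * q.coeff 1 ^ 2 - p.coeff 0 * q.coeff 1 ^ 3 := by
  have h4 : p.natDegree + q.natDegree = 4 := by omega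
  rw [_root_.resultant, ← Matrix.det_reindex_self (finCongr h4) (_root_.sylvester p q)]
  have hM : Matrix.reindex (finCongr h4) (finCongr h4) (_root_.sylvester p q) =
      !![p.coeff 3, p.coeff 2, p.coeff 1, p.coeff 0;
         q.coeff 1, q.coeff 0, 0, 0;
         0, q.coeff 1, q.coeff 0, 0;
         0, 0, q.coeff 1, q.coeff 0] := by
    ext i j
    fin_cases i <;> fin_cases j <;>
      norm_num [_root_.sylvester, hp, hq, Matrix.reindex_apply, finCongr, Fin.lt_def]
  rw [hM, Matrix.det_succ_row_zero]
  simp [Fin.sum_univ_succ, Matrix.det_fin_three, Fin.succAbove]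
  ring

theorem resultant_cubic_linear {R : Type*} [CommRing R] {a₃ b₁ : R} (a₂ a₁ a₀ b₀ : R)
    (ha₃ : a₃ ≠ 0) (hb₁ : b₁ ≠ 0) :
    _root_.resultant (C a₃ * X ^ 3 + C a₂ * X ^ 2 + C a₁ * X + C a₀) (C b₁ * X + C b₀) =
      a₃ * b₀ ^ 3 - a₂ * b₀ ^ 2 * b₁ + a₁ * b₀ * b₁ ^ 2 - a₀ * b₁ ^ 3 := by
  rw [resultant_eq_of_natDegree_eq_three_of_natDegree_eq_one (by compute_degree!)
    (by compute_degree!)]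
  simp [coeff_X, coeff_X_pow, coeff_C]

theorem X_sub_X_sq_ne_zero {R : Type*} [CommRing R] [Nontrivial R] :
    (X : R[X]) - X ^ 2 ≠ 0 := by
  intro h
  simpa [coeff_X, coeff_X_pow] using congrArg (coeff · 2) h

theorem gpoly_X_C {R : Type*} [CommRing R] (y : R) :
    gpoly (X : R[X]) (C y) =
      C (y ^ 2 + 3 * y + 9) * X ^ 3 + C 0 * X ^ 2 + C 0 * X + C (-(y + 6) ^ 3) := by
  simp only [gpoly, map_add, map_mul, map_pow, map_neg, map_ofNat, C_0]
  ring

theorem hpoly_X_C {R : Type*} [CommRing R] (z : R) :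
    hpoly (X : R[X]) (C z) = C (z - z ^ 2) * X + C (z ^ 3 - 3 * z ^ 2 + 1) := by
  simp only [hpoly, map_add, map_sub, map_mul, map_pow, map_ofNat, map_one]
  ring

theorem resultant_gpoly_hpoly {R : Type*} [CommRing R] [Nontrivial R] {z : R}
    (hz : z - z ^ 2 ≠ 0) :
    _root_.resultant (gpoly (X : R[X][X]) (C X)) (hpoly X (C (C z))) =
      C ((z - z ^ 2) ^ 3) * X ^ 3 + C ((z ^ 3 - 3 * z ^ 2 + 1) ^ 3 + 18 * (z - z ^ 2) ^ 3) * X ^ 2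
        + C (3 * (z ^ 3 - 3 * z ^ 2 + 1) ^ 3 + 108 * (z - z ^ 2) ^ 3) * X
        + C (9 * (z ^ 3 - 3 * z ^ 2 + 1) ^ 3 + 216 * (z - z ^ 2) ^ 3) := by
  have hy : (X ^ 2 + 3 * X + 9 : R[X]) ≠ 0 := Monic.ne_zero (by monicity!)
  have hz' : C z - C z ^ 2 ≠ 0 := by simpa only [map_sub, map_pow] using C_ne_zero.2 hz
  rw [gpoly_X_C, hpoly_X_C, resultant_cubic_linear _ _ _ _ hy hz']
  simp only [map_add, map_mul, map_pow, map_sub, map_ofNat, map_one]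
  ring

/- `ℤ[X][X][X][X]` is read as `ℤ[z][w][y][x]`, so in `ℤ[X][X]` we have `z = C X` and `w = X`. -/
theorem statement0 :
    _root_.resultant
      (_root_.resultant
        (gpoly (Polynomial.X : Polynomial (Polynomial (Polynomial (Polynomial ℤ))))
          (Polynomial.C Polynomial.X))
        (hpoly Polynomial.X (Polynomial.C (Polynomial.C (Polynomial.C Polynomial.X)))))
      (hpoly Polynomial.X (Polynomial.C Polynomial.X)) =
    -(k1poly (Polynomial.C (Polynomial.X : Polynomial ℤ)) Polynomial.X
        * k2poly (Polynomial.C (Polynomial.X : Polynomial ℤ)) Polynomial.X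
        * fpoly (Polynomial.C (Polynomial.X : Polynomial ℤ)) Polynomial.X) := by
  have hz : (C X : ℤ[X][X]) - C X ^ 2 ≠ 0 := by
    simpa only [map_sub, map_pow] using C_ne_zero.2 (X_sub_X_sq_ne_zero (R := ℤ))
  rw [resultant_gpoly_hpoly hz, hpoly_X_C,
    resultant_cubic_linear _ _ _ _ (pow_ne_zero 3 hz) X_sub_X_sq_ne_zero]
  simp only [fpoly, k1poly, k2poly]
  ring
end

section
/- For every n ≥ 1 the polynomial Rₙ(x) ∈ ℤ[x] has degree exactly 2·3ⁿ − 1. -/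
open Polynomial

/-- The iterated resultant `R⁽ⁿ⁾(x, xₙ)`, for `n ≥ 1`, as an element of `ℤ[x][xₙ]`
(`x` is the inner variable, `xₙ` the outer one):
`R⁽¹⁾(x,x₁) = f(x,x₁)` and
`R⁽ⁿ⁾(x,xₙ) = Res_{x_{n−1}}(R⁽ⁿ⁻¹⁾(x,x_{n−1}), f(x_{n−1},xₙ))` for `n ≥ 2`;
the resultant is taken with respect to the variable `x_{n−1}`.
(The value at `n = 0` is junk.) -/
noncomputable def Rbig : ℕ → Polynomial (Polynomial ℤ)
  | 0 => 1
  | 1 => fpoly (Polynomial.C (Polynomial.X : Polynomial ℤ)) Polynomial.X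
  | (n + 2) =>
      _root_.resultant ((Rbig (n + 1)).map (Polynomial.C : Polynomial ℤ →+* Polynomial (Polynomial ℤ)))
        (fpoly Polynomial.X (Polynomial.C (Polynomial.X : Polynomial (Polynomial ℤ))))

/-- `Rₙ(x) = R⁽ⁿ⁾(x, x) ∈ ℤ[x]`. -/
noncomputable def Rn (n : ℕ) : Polynomial ℤ := (Rbig n).eval Polynomial.X


/-!
Write `R⁽ⁿ⁾ = P(x, t)` with `m = 3ⁿ`. By induction, `P` is monic of degree `m` in `t`, has
degree at most `m` in `x`, and the coefficient of `xᵐ tᵐ⁻¹` is `-1`; this forces `P(x, x)` to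
have degree `2m - 1`. The resultant `Q(x, y) = Res_t(P(x, t), f(t, y))` is homogeneous of degree
`3` in the coefficients of `P` and of degree `m` in those of `f(t, y)`. As the top `y`-part of
`f(t, y)` is `y³`, the top `y`-part of `Q` is `Res(P, 1) y³ᵐ = y³ᵐ`. Its top `x`-part is
`Res_{m,3}(L, f(t, y)) x³ᵐ` with `L = [xᵐ] P = -tᵐ⁻¹ + ⋯`; since `L` has degree `m - 1`, this
resultant is `(y² - y + 1) · Res_{m-1,3}(L, f(t, y)) = (y² - y + 1)(-y³ᵐ⁻³ + ⋯)`, so the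
coefficient of `x³ᵐ y³ᵐ⁻¹` in `Q` is again `-1`.
-/

open Polynomial.Bivariate

theorem resultant_eq_polynomial_resultant {R : Type*} [CommRing R] (p q : R[X]) :
    _root_.resultant p q = p.resultant q := by
  have h : _root_.sylvester p q =
      ((Polynomial.sylvester p q p.natDegree q.natDegree).submatrix Fin.rev Fin.rev).transpose := by
    ext i j
    obtain ⟨k, rfl⟩ := Fin.revPerm.surjective i
    simp only [Fin.revPerm_apply, Matrix.transpose_apply, Matrix.submatrix_apply, Fin.rev_rev]
    have hj := j.isLt
    induction k using Fin.addCases with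
    | left k =>
      have hk := k.isLt
      simp only [_root_.sylvester, Polynomial.sylvester, Matrix.of_apply, Fin.addCases_left,
        Fin.val_rev, Fin.val_castAdd, Set.mem_Icc]
      split_ifs <;> first | rfl | omega | (congr 1; omega)
    | right k =>
      have hk := k.isLt
      simp only [_root_.sylvester, Polynomial.sylvester, Matrix.of_apply, Fin.addCases_right,
        Fin.val_rev, Fin.val_natAdd, Set.mem_Icc]
      split_ifs <;> first | rfl | omega | (congr 1; omega)
  rw [_root_.resultant, h, Matrix.det_transpose]
  exact Matrix.det_submatrix_equiv_self Fin.revPerm _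

section
variable {R : Type*} [CommRing R]

theorem coeff_prod_sum_of_natDegree_le {ι : Type*} (s : Finset ι) (f : ι → R[X]) (w : ι → ℕ)
    (h : ∀ i ∈ s, (f i).natDegree ≤ w i) :
    (∏ i ∈ s, f i).coeff (∑ i ∈ s, w i) = ∏ i ∈ s, (f i).coeff (w i) := by
  classical
  induction s using Finset.induction_on with
  | empty => simp
  | insert a s ha ih =>
    simp only [Finset.forall_mem_insert] at h
    rw [Finset.prod_insert ha, Finset.sum_insert ha, Finset.prod_insert ha,
      coeff_mul_add_eq_of_natDegree_le h.1
        ((natDegree_prod_le s f).trans (Finset.sum_le_sum h.2)), ih h.2]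

variable {n : Type*} [Fintype n] [DecidableEq n]

theorem Matrix.natDegree_det_le_of_natDegree_le (M : Matrix n n R[X]) (w : n → ℕ)
    (h : ∀ i j, (M i j).natDegree ≤ w j) : M.det.natDegree ≤ ∑ j, w j := by
  rw [Matrix.det_apply']
  refine natDegree_sum_le_of_forall_le _ _ fun σ _ => ?_
  refine natDegree_mul_le.trans ?_
  rw [natDegree_intCast, zero_add]
  exact (natDegree_prod_le _ _).trans (Finset.sum_le_sum fun j _ => h (σ j) j)

theorem Matrix.coeff_det_of_natDegree_le (M : Matrix n n R[X]) (w : n → ℕ)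
    (h : ∀ i j, (M i j).natDegree ≤ w j) :
    M.det.coeff (∑ j, w j) = (Matrix.of fun i j => (M i j).coeff (w j)).det := by
  simp only [Matrix.det_apply', finsetSum_coeff, coeff_intCast_mul,
    coeff_prod_sum_of_natDegree_le _ _ _ fun j _ => h _ j, Matrix.of_apply]

end

section
variable {R : Type*} [CommSemiring R]

theorem coeff_coeff_swap (p : R[X][Y]) (a b : ℕ) :
    ((swap p).coeff a).coeff b = (p.coeff b).coeff a := by
  induction p using Polynomial.induction_on' with
  | add p q hp hq => simp [hp, hq]
  | monomial k r =>
    induction r using Polynomial.induction_on' with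
    | add r s hr hs => simp_all [map_add]
    | monomial j c =>
      simp only [swap_monomial_monomial, coeff_monomial]
      split_ifs <;> simp_all [coeff_monomial]

theorem natDegree_coeff_le_of_natDegree_swap_le {p : R[X][Y]} {a : ℕ}
    (h : (swap p).natDegree ≤ a) (k : ℕ) : (p.coeff k).natDegree ≤ a := by
  refine natDegree_le_iff_coeff_eq_zero.mpr fun N hN => ?_
  rw [← coeff_coeff_swap, coeff_eq_zero_of_natDegree_lt (h.trans_lt hN), coeff_zero]

theorem swap_map_mapRingHom {S : Type*} [CommSemiring S] (φ : R →+* S) (p : R[X][X]) :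
    swap (p.map (mapRingHom φ)) = (swap p).map (mapRingHom φ) := by
  ext a b
  simp [coeff_coeff_swap]

end

section
variable {S : Type*} [CommRing S] {f g : S[X][Y]} {a b : ℕ}

theorem natDegree_sylvester_apply_le (hf : (swap f).natDegree ≤ a)
    (hg : (swap g).natDegree ≤ b) (m n : ℕ) (i j : Fin (m + n)) :
    (Polynomial.sylvester f g m n i j).natDegree ≤ Fin.addCases (fun _ => b) (fun _ => a) j := by
  induction j using Fin.addCases <;>
  · simp only [Polynomial.sylvester, Matrix.of_apply, Fin.addCases_left, Fin.addCases_right]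
    split_ifs
    · exact natDegree_coeff_le_of_natDegree_swap_le ‹_› _
    · simp

theorem natDegree_resultant_le_of_natDegree_swap_le (hf : (swap f).natDegree ≤ a)
    (hg : (swap g).natDegree ≤ b) (m n : ℕ) :
    (Polynomial.resultant f g m n).natDegree ≤ n * a + m * b := by
  have := Matrix.natDegree_det_le_of_natDegree_le _ _ (natDegree_sylvester_apply_le hf hg m n)
  simp only [Fin.sum_univ_add, Fin.addCases_left, Fin.addCases_right, Finset.sum_const,
    Finset.card_univ, Fintype.card_fin, smul_eq_mul] at this
  exact this.trans_eq (add_comm _ _)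

theorem coeff_resultant_of_natDegree_swap_le (hf : (swap f).natDegree ≤ a)
    (hg : (swap g).natDegree ≤ b) (m n : ℕ) :
    (Polynomial.resultant f g m n).coeff (n * a + m * b) =
      Polynomial.resultant ((swap f).coeff a) ((swap g).coeff b) m n := by
  have := Matrix.coeff_det_of_natDegree_le _ _ (natDegree_sylvester_apply_le hf hg m n)
  simp only [Fin.sum_univ_add, Fin.addCases_left, Fin.addCases_right, Finset.sum_const,
    Finset.card_univ, Fintype.card_fin, smul_eq_mul] at this
  rw [Polynomial.resultant, add_comm (n * a), this, Polynomial.resultant]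
  congr 1
  ext i j
  induction j using Fin.addCases <;>
  · simp only [Polynomial.sylvester, Matrix.of_apply, Fin.addCases_left, Fin.addCases_right,
      coeff_coeff_swap]
    split_ifs <;> simp

end

section
variable {R : Type*} [CommRing R]

theorem natDegree_eval_X_le {P : R[X][X]} {a b : ℕ} (ha : ∀ k, (P.coeff k).natDegree ≤ a)
    (hb : P.natDegree ≤ b) : (P.eval X).natDegree ≤ a + b := by
  rw [eval_eq_sum_range' (Nat.lt_succ_of_le hb)]
  refine natDegree_sum_le_of_forall_le _ _ fun k hk => ?_
  have := Finset.mem_range_succ_iff.mp hk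
  exact (natDegree_mul_le.trans (add_le_add (ha k) (natDegree_X_pow_le k))).trans (by omega)

theorem coeff_eval_X_of_natDegree_le {P : R[X][X]} {a b : ℕ}
    (ha : ∀ k, (P.coeff k).natDegree ≤ a) (hb : P.natDegree ≤ b) :
    (P.eval X).coeff (a + b) = (P.coeff b).coeff a := by
  rw [eval_eq_sum_range' (Nat.lt_succ_of_le hb), finsetSum_coeff,
    Finset.sum_eq_single_of_mem b (Finset.self_mem_range_succ b), coeff_mul_X_pow]
  intro k hk hkb
  have := Finset.mem_range_succ_iff.mp hk
  rw [coeff_mul_X_pow', if_pos (by omega), coeff_eq_zero_of_natDegree_lt (by have := ha k; omega)]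

theorem map_fpoly {S F : Type*} [CommRing S] [FunLike F R S] [RingHomClass F R S] (φ : F)
    (z w : R) : φ (fpoly z w) = fpoly (φ z) (φ w) := by
  simp [fpoly, map_ofNat]

theorem fpoly_C_X (v : R) :
    fpoly (C v) X = X ^ 3 + C (-v ^ 3 + 6 * v ^ 2 - 6 * v - 1) * X ^ 2 +
      C (v ^ 3 - 3 * v ^ 2 + 3 * v + 1) * X - C (v ^ 3) := by
  simp only [fpoly, map_add, map_sub, map_mul, map_pow, map_neg, map_one, map_ofNat]

theorem fpoly_X_C (v : R) :
    fpoly X (C v) = C (v ^ 3 - v ^ 2 + v) + C (-6 * v ^ 2 + 3 * v) * X +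
      C (6 * v ^ 2 - 3 * v) * X ^ 2 + C (-v ^ 2 + v - 1) * X ^ 3 := by
  simp only [fpoly, map_add, map_sub, map_mul, map_pow, map_neg, map_one, map_ofNat]
  ring

theorem natDegree_fpoly_C_X_le (v : R) : (fpoly (C v) X).natDegree ≤ 3 := by
  rw [fpoly_C_X]; compute_degree

theorem natDegree_fpoly_X_C_le (v : R) : (fpoly X (C v)).natDegree ≤ 3 := by
  rw [fpoly_X_C]; compute_degree

theorem coeff_fpoly_C_X_three (v : R) : (fpoly (C v) X).coeff 3 = 1 := by
  simp only [fpoly_C_X, coeff_add, coeff_sub, coeff_C_mul, coeff_X_pow, coeff_X, coeff_C]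
  norm_num

theorem coeff_fpoly_X_C_three (v : R) : (fpoly X (C v)).coeff 3 = -v ^ 2 + v - 1 := by
  simp only [fpoly_X_C, coeff_add, coeff_C_mul, coeff_X_pow, coeff_X, coeff_C]
  norm_num

theorem natDegree_fpoly_X_C_X [Nontrivial R] : (fpoly X (C X) : R[X][X]).natDegree = 3 := by
  refine natDegree_eq_of_le_of_coeff_ne_zero (natDegree_fpoly_X_C_le X) fun h => ?_
  have h2 := congrArg (coeff · 2) h
  simp [coeff_fpoly_X_C_three, coeff_X, coeff_one] at h2

theorem swap_fpoly_C_X_X : swap (fpoly (C X) X : R[X][X]) = (fpoly X (C X) : R[X][X]) := by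
  rw [map_fpoly, swap_X, swap_Y]

theorem swap_fpoly_X_C_X : swap (fpoly X (C X) : R[X][X]) = (fpoly (C X) X : R[X][X]) := by
  rw [map_fpoly, swap_X, swap_Y]

theorem natDegree_resultant_map_C_fpoly_le (F : R[X]) (k : ℕ) :
    (Polynomial.resultant (F.map C) (fpoly X (C X)) k 3).natDegree ≤ k * 3 := by
  simpa using natDegree_resultant_le_of_natDegree_swap_le (a := 0) (b := 3)
    (by rw [swap_map_C, natDegree_C]) (by rw [swap_fpoly_X_C_X]; exact natDegree_fpoly_C_X_le X)
    k 3

theorem coeff_resultant_map_C_fpoly (F : R[X]) (k : ℕ) :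
    (Polynomial.resultant (F.map C) (fpoly X (C X)) k 3).coeff (k * 3) = F.coeff k ^ 3 := by
  have := coeff_resultant_of_natDegree_swap_le (f := F.map C) (g := fpoly X (C X)) (a := 0)
    (b := 3) (by rw [swap_map_C, natDegree_C])
    (by rw [swap_fpoly_X_C_X]; exact natDegree_fpoly_C_X_le X) k 3
  rwa [swap_map_C, coeff_C_zero, swap_fpoly_X_C_X, coeff_fpoly_C_X_three, resultant_one_right,
    mul_zero, zero_add] at this

/-- `P = tᵐ + ∑_{j < m} c_j(x) tʲ` with `deg c_j ≤ m` and `[xᵐ] c_{m-1} = -1`, where `t` is the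
variable of `P` and `x` that of its coefficients. -/
structure HasCornerShape (m : ℕ) (P : R[X][X]) : Prop where
  one_lt : 1 < m
  monic : P.Monic
  natDegree_eq : P.natDegree = m
  natDegree_swap_le : (swap P).natDegree ≤ m
  coeff_swap_coeff : ((swap P).coeff m).coeff (m - 1) = -1

variable [Nontrivial R]

theorem hasCornerShape_fpoly : HasCornerShape 3 (fpoly (C X) X : R[X][X]) where
  one_lt := by norm_num
  monic := monic_of_natDegree_le_of_coeff_eq_one 3 (natDegree_fpoly_C_X_le X)
    (coeff_fpoly_C_X_three X)
  natDegree_eq := natDegree_eq_of_le_of_coeff_ne_zero (natDegree_fpoly_C_X_le X)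
    (by rw [coeff_fpoly_C_X_three]; exact one_ne_zero)
  natDegree_swap_le := by rw [swap_fpoly_C_X_X]; exact natDegree_fpoly_X_C_le X
  coeff_swap_coeff := by
    rw [swap_fpoly_C_X_X, coeff_fpoly_X_C_three]
    simp [coeff_X, coeff_one]

theorem HasCornerShape.degree_eval_X {m : ℕ} {P : R[X][X]} (h : HasCornerShape m P) :
    (P.eval X).degree = (2 * m - 1 : ℕ) := by
  have hP : P = P.eraseLead + X ^ m := by
    simpa [h.monic.leadingCoeff, h.natDegree_eq] using P.eraseLead_add_C_mul_X_pow.symm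
  have ha : ∀ k, (P.eraseLead.coeff k).natDegree ≤ m := fun k => by
    rw [eraseLead_coeff]
    split_ifs
    · simp
    · exact natDegree_coeff_le_of_natDegree_swap_le h.natDegree_swap_le k
  have hb : P.eraseLead.natDegree ≤ m - 1 := h.natDegree_eq ▸ eraseLead_natDegree_le P
  have hm := h.one_lt
  rw [hP, eval_add, eval_X_pow]
  refine degree_eq_of_le_of_coeff_ne_zero ?_ ?_
  · refine degree_le_of_natDegree_le (natDegree_add_le_of_degree_le ?_ ?_)
    · exact (natDegree_eval_X_le ha hb).trans (by omega)
    · rw [natDegree_X_pow]; omega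
  · rw [coeff_add, show 2 * m - 1 = m + (m - 1) by omega, coeff_eval_X_of_natDegree_le ha hb,
      coeff_X_pow, if_neg (by omega), add_zero,
      eraseLead_coeff_of_ne _ (by rw [h.natDegree_eq]; omega), ← coeff_coeff_swap,
      h.coeff_swap_coeff]
    exact neg_ne_zero.mpr one_ne_zero

theorem HasCornerShape.resultant_fpoly {m : ℕ} {P : R[X][X]} (h : HasCornerShape m P) :
    HasCornerShape (3 * m) (_root_.resultant (P.map C) (fpoly X (C X))) := by
  have hm := h.one_lt
  rw [resultant_eq_polynomial_resultant, natDegree_map_eq_of_injective C_injective,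
    h.natDegree_eq, natDegree_fpoly_X_C_X]
  set Q := Polynomial.resultant (P.map C) (fpoly X (C X)) m 3
  have hQdeg : Q.natDegree ≤ 3 * m :=
    (natDegree_resultant_map_C_fpoly_le P m).trans_eq (mul_comm _ _)
  have hQcoeff : Q.coeff (3 * m) = 1 := by
    rw [mul_comm, coeff_resultant_map_C_fpoly, ← h.natDegree_eq, h.monic.coeff_natDegree, one_pow]
  set L := (swap P).coeff m
  have hL : (L.map C).natDegree ≤ m - 1 := by
    refine natDegree_map_le.trans (natDegree_le_iff_coeff_eq_zero.mpr fun k hk => ?_)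
    rw [coeff_coeff_swap]
    rcases (show m ≤ k by omega).eq_or_lt with rfl | hk
    · rw [← h.natDegree_eq, h.monic.coeff_natDegree, h.natDegree_eq, coeff_one, if_neg (by omega)]
    · rw [coeff_eq_zero_of_natDegree_lt (p := P) (h.natDegree_eq ▸ hk), coeff_zero]
  -- The `x`-degree of `Q` is its `y`-degree after swapping the two variables of the base ring.
  have hswap : swap Q = Polynomial.resultant (P.map (mapRingHom C))
      ((fpoly X (C X) : R[X][X]).map C) m 3 := by
    let φ : R[X][X] →+* R[X][X] := swap.toRingHom
    have hC : φ.comp C = mapRingHom C := RingHom.ext swap_C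
    have hq : (fpoly X (C X) : R[X][X][X]).map φ = (fpoly X (C X) : R[X][X]).map C := by
      simp [fpoly, φ, swap_Y]
    rw [← hq, ← hC, ← map_map, resultant_map_map]
    rfl
  have hf : (swap (P.map (mapRingHom C))).natDegree ≤ m := by
    rw [swap_map_mapRingHom]; exact natDegree_map_le.trans h.natDegree_swap_le
  have hg : (swap ((fpoly X (C X) : R[X][X]).map C)).natDegree ≤ 0 := by
    rw [swap_map_C, natDegree_C]
  have hswapdeg := natDegree_resultant_le_of_natDegree_swap_le hf hg m 3
  have hswapcoeff := coeff_resultant_of_natDegree_swap_le hf hg m 3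
  rw [mul_zero, add_zero, ← hswap] at hswapdeg hswapcoeff
  rw [swap_map_mapRingHom, coeff_map, coe_mapRingHom, swap_map_C, coeff_C_zero] at hswapcoeff
  have hres : Polynomial.resultant (L.map C) (fpoly X (C X)) m 3 =
      (X ^ 2 - X + 1) * Polynomial.resultant (L.map C) (fpoly X (C X)) (m - 1) 3 := by
    conv_lhs => rw [show m = m - 1 + 1 by omega]
    rw [resultant_succ_left_deg _ _ _ _ hL, coeff_fpoly_X_C_three]
    ring
  have hDdeg := natDegree_resultant_map_C_fpoly_le L (m - 1)
  have hDcoeff := coeff_resultant_map_C_fpoly L (m - 1)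
  have hLcoeff : L.coeff (m - 1) = -1 := h.coeff_swap_coeff
  refine ⟨by omega, monic_of_natDegree_le_of_coeff_eq_one _ hQdeg hQcoeff,
    natDegree_eq_of_le_of_coeff_ne_zero hQdeg (hQcoeff ▸ one_ne_zero), hswapdeg, ?_⟩
  have hquad : ((X ^ 2 - X + 1 : R[X])).natDegree ≤ 2 := by compute_degree
  rw [hswapcoeff, hres, show 3 * m - 1 = 2 + (m - 1) * 3 by omega,
    coeff_mul_add_eq_of_natDegree_le hquad hDdeg, hDcoeff, hLcoeff]
  norm_num [coeff_X, coeff_one]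

end

/-- For every `n ≥ 1`, `Rₙ(x) ∈ ℤ[x]` has degree exactly `2·3ⁿ − 1`. -/
theorem statement6 (n : ℕ) (hn : 1 ≤ n) :
    (Rn n).degree = (2 * 3 ^ n - 1 : ℕ) := by
  suffices HasCornerShape (3 ^ n) (Rbig n) from this.degree_eval_X
  induction n, hn using Nat.le_induction with
  | base => exact hasCornerShape_fpoly
  | succ k _ ih =>
    obtain ⟨j, rfl⟩ : ∃ j, k = j + 1 := ⟨k - 1, by omega⟩
    rw [pow_succ', Rbig]
    exact ih.resultant_fpoly
end

section
/- Viewing z³ − 6z² + 3z + 1 and f(z,w) as polynomials in z over ℤ[w] (each of degree 3 in z), one has Res_z( z³ − 6z² + 3z + 1, f(z,w) ) = (w³ − 6w² + 3w + 1)³. -/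
open Polynomial

namespace Cubic

variable {R : Type*} [CommRing R]

theorem resultant_toPoly_eq_det (P Q : Cubic R) (hP : P.a ≠ 0) (hQ : Q.a ≠ 0) :
    _root_.resultant P.toPoly Q.toPoly =
      Matrix.det !![P.a, P.b, P.c, P.d, 0, 0;
                    0, P.a, P.b, P.c, P.d, 0;
                    0, 0, P.a, P.b, P.c, P.d;
                    Q.a, Q.b, Q.c, Q.d, 0, 0;
                    0, Q.a, Q.b, Q.c, Q.d, 0;
                    0, 0, Q.a, Q.b, Q.c, Q.d] := by
  have h : P.toPoly.natDegree + Q.toPoly.natDegree = 6 := by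
    rw [natDegree_of_a_ne_zero hP, natDegree_of_a_ne_zero hQ]
  rw [_root_.resultant, ← Matrix.det_reindex_self (finCongr h)]
  congr 1
  ext i j
  fin_cases i <;> fin_cases j <;>
    simp [_root_.sylvester, natDegree_of_a_ne_zero, hP, hQ, coeff_eq_a, coeff_eq_b, coeff_eq_c,
      coeff_eq_d]

end Cubic

/-- Viewing `z³ − 6z² + 3z + 1` and `f(z,w)` as polynomials in `z` over `ℤ[w]` (so below
the outer variable is `z` and the inner variable is `w`),
`Res_z(z³ − 6z² + 3z + 1, f(z,w)) = (w³ − 6w² + 3w + 1)³`. -/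
theorem statement8 :
    _root_.resultant
      ((Polynomial.X : Polynomial (Polynomial ℤ)) ^ 3 - 6 * Polynomial.X ^ 2
        + 3 * Polynomial.X + 1)
      (fpoly Polynomial.X (Polynomial.C (Polynomial.X : Polynomial ℤ))) =
    ((Polynomial.X : Polynomial ℤ) ^ 3 - 6 * Polynomial.X ^ 2 + 3 * Polynomial.X + 1) ^ 3 := by
  have hp_eq : (X ^ 3 - 6 * X ^ 2 + 3 * X + 1 : ℤ[X][X]) = Cubic.toPoly ⟨1, -6, 3, 1⟩ := by
    simp only [Cubic.toPoly, map_one, map_neg, map_ofNat]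
    ring
  have hf_eq : fpoly X (C X : ℤ[X][X]) = Cubic.toPoly
      ⟨-X ^ 2 + X - 1, 6 * X ^ 2 - 3 * X, -6 * X ^ 2 + 3 * X, X ^ 3 - X ^ 2 + X⟩ := by
    simp only [Cubic.toPoly, fpoly, map_add, map_sub, map_neg, map_mul, map_pow, map_one, map_ofNat]
    ring
  have hf_lead : (-X ^ 2 + X - 1 : ℤ[X]) ≠ 0 := fun h => by simpa using congrArg (eval 0) h
  rw [hp_eq, hf_eq, Cubic.resultant_toPoly_eq_det _ _ one_ne_zero hf_lead]
  simp only [Matrix.det_succ_row_zero, Fin.sum_univ_succ, Finset.univ_unique, Finset.sum_singleton,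
    Matrix.det_unique, Matrix.submatrix_apply, Matrix.of_apply, Fin.succAbove, Matrix.cons_val,
    Fin.reduceSucc, Fin.reduceCastSucc, Fin.reduceLT, Fin.default_eq_zero, Fin.coe_ofNat_eq_mod,
    ↓reduceIte]
  ring
end

section
/- Let K be a field that is complete with respect to a discrete valuation v (additive, normalized so that v(K×) = ℤ) with v(3) = 1. Let γ ∈ K with v(γ) = 1, and set α = 3 + γ³. Then the polynomial x³ − (3 + α)x² + αx + 1 is irreducible in K[x]. -/
open Polynomial Multiplicative

noncomputable def oo (n : ℤ) : WithZero (Multiplicative ℤ) :=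
  ((Multiplicative.ofAdd n : Multiplicative ℤ) : WithZero (Multiplicative ℤ))

lemma oo_mul (a b : ℤ) : oo a * oo b = oo (a + b) := by
  simp [oo, ← WithZero.coe_mul, ← ofAdd_add]

lemma oo_le {a b : ℤ} : oo a ≤ oo b ↔ a ≤ b := by
  simp [oo, WithZero.coe_le_coe, Multiplicative.ofAdd_le]

lemma oo_lt {a b : ℤ} : oo a < oo b ↔ a < b := by
  simp [oo, WithZero.coe_lt_coe, Multiplicative.ofAdd_lt]

lemma oo_pow (a : ℤ) (n : ℕ) : oo a ^ n = oo (n * a) := by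
  simp [oo, ← WithZero.coe_pow, ← ofAdd_nsmul]

lemma oo_cube (a : ℤ) : oo a ^ 3 = oo (3 * a) := by
  rw [oo_pow]; norm_num

lemma oo_sq (a : ℤ) : oo a ^ 2 = oo (2 * a) := by
  rw [oo_pow]; norm_num

lemma oo_zero : oo 0 = 1 := rfl

lemma coe_eq_oo (b : Multiplicative ℤ) :
    (b : WithZero (Multiplicative ℤ)) = oo (Multiplicative.toAdd b) := by simp [oo]

lemma cube_le {x : WithZero (Multiplicative ℤ)} (h : x ^ 3 ≤ oo (-1)) : x ≤ oo (-1) := by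
  by_cases hx : x = 0
  · simp [hx]
  · obtain ⟨b, rfl⟩ := WithZero.ne_zero_iff_exists.mp hx
    rw [coe_eq_oo, oo_cube, oo_le] at h
    rw [coe_eq_oo, oo_le]
    omega


/-- Let `K` be a field complete with respect to a discrete valuation `v` (written
multiplicatively here, with value group `ℤₘ₀ = WithZero (Multiplicative ℤ)`; surjectivity
of `v` expresses that the additive valuation is normalized with `v(K×) = ℤ`, and
`v x = ofAdd (−n)` corresponds to additive valuation `n`).  Assume `v(3) = 1` additively,
let `γ ∈ K` with `v(γ) = 1` additively, and set `α = 3 + γ³`.  Then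
`x³ − (3 + α)x² + αx + 1` is irreducible in `K[x]`. -/
theorem statement11 (K : Type*) [Field K]
    [Valued K (WithZero (Multiplicative ℤ))] [CompleteSpace K]
    (hsurj : Function.Surjective (Valued.v : K → WithZero (Multiplicative ℤ)))
    (h3 : Valued.v (3 : K) = ((ofAdd (-1 : ℤ) : Multiplicative ℤ) : WithZero (Multiplicative ℤ)))
    (γ : K)
    (hγ : Valued.v γ = ((ofAdd (-1 : ℤ) : Multiplicative ℤ) : WithZero (Multiplicative ℤ)))
    (α : K) (hα : α = 3 + γ ^ 3) :
    Irreducible (Polynomial.X ^ 3 - Polynomial.C (3 + α) * Polynomial.X ^ 2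
      + Polynomial.C α * Polynomial.X + 1 : Polynomial K) := by
  set v : Valuation K (WithZero (Multiplicative ℤ)) := Valued.v with hv
  set p : Polynomial K := Polynomial.X ^ 3 - Polynomial.C (3 + α) * Polynomial.X ^ 2
      + Polynomial.C α * Polynomial.X + 1 with hp
  have hdeg : p.natDegree = 3 := by
    unfold p
    compute_degree!
  rw [Polynomial.irreducible_iff_roots_eq_zero_of_degree_le_three (by omega) (by omega)]
  rw [Multiset.eq_zero_iff_forall_notMem]
  intro r hr
  have hp0 : p ≠ 0 := fun h => by simp [h] at hdeg
  rw [Polynomial.mem_roots hp0] at hr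
  have hroot : r ^ 3 - (3 + α) * r ^ 2 + α * r + 1 = 0 := by
    have := hr
    simpa only [Polynomial.IsRoot, hp, Polynomial.eval_add, Polynomial.eval_sub,
      Polynomial.eval_mul, Polynomial.eval_pow, Polynomial.eval_X, Polynomial.eval_C,
      Polynomial.eval_one] using this
  -- basic valuations
  have h3' : v (3 : K) = oo (-1) := h3
  have hγ3 : v (γ ^ 3) = oo (-3) := by
    rw [map_pow, show v γ = oo (-1) from hγ, oo_cube]; norm_num
  have hvα : v α = oo (-1) := by
    rw [hα, v.map_add_eq_of_lt_left (by rw [h3', hγ3]; exact oo_lt.mpr (by norm_num)), h3']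
  have hv2 : v (2 : K) = 1 := by
    have h23 : (2 : K) = 3 + (-1) := by norm_num
    rw [h23, v.map_add_eq_of_lt_right (by rw [h3', v.map_neg, map_one, ← oo_zero]; exact oo_lt.mpr (by norm_num)), v.map_neg, map_one]
  have hv6 : v (6 : K) = oo (-1) := by
    have : (6 : K) = 2 * 3 := by norm_num
    rw [this, map_mul, hv2, h3', one_mul]
  have hv9 : v (9 : K) = oo (-2) := by
    have : (9 : K) = 3 * 3 := by norm_num
    rw [this, map_mul, h3', oo_mul]; norm_num
  have hv3α : v (3 + α) = oo (-1) := by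
    have h6 : (3 : K) + α = 6 + γ ^ 3 := by rw [hα]; ring
    rw [h6, v.map_add_eq_of_lt_left (by rw [hv6, hγ3]; exact oo_lt.mpr (by norm_num)), hv6]
  -- r ≠ 0
  have hr0 : r ≠ 0 := by
    rintro rfl
    simp at hroot
  obtain ⟨b, hb⟩ := WithZero.ne_zero_iff_exists.mp ((Valuation.ne_zero_iff v).mpr hr0)
  have hvr : v r = oo (Multiplicative.toAdd b) := by rw [← hb, coe_eq_oo]
  set a : ℤ := Multiplicative.toAdd b with ha
  have hvr3 : v (r ^ 3) = oo (3 * a) := by rw [map_pow, hvr, oo_cube]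
  have hvr2 : v (r ^ 2) = oo (2 * a) := by rw [map_pow, hvr, oo_sq]
  rcases lt_trichotomy a 0 with hac | hac | hac
  · -- a < 0 : the constant term 1 dominates
    have key : (1 : K) = -(r ^ 3) + (3 + α) * r ^ 2 - α * r := by linear_combination hroot
    have hlt : v (-(r ^ 3) + (3 + α) * r ^ 2 - α * r) < 1 := by
      have h1 : v (-(r ^ 3)) < 1 := by
        rw [v.map_neg, hvr3, ← oo_zero]; exact oo_lt.mpr (by omega)
      have h2 : v ((3 + α) * r ^ 2) < 1 := by
        rw [map_mul, hv3α, hvr2, oo_mul, ← oo_zero]; exact oo_lt.mpr (by omega)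
      have h3 : v (α * r) < 1 := by
        rw [map_mul, hvα, hvr, oo_mul, ← oo_zero]; exact oo_lt.mpr (by omega)
      rw [sub_eq_add_neg]
      exact v.map_add_lt (v.map_add_lt h1 h2) (by rwa [v.map_neg])
    rw [← key, map_one] at hlt
    exact lt_irrefl _ hlt
  · -- a = 0 : substitute s = r + 1
    replace hvr : v r = 1 := by rw [hvr, hac]; rfl
    replace hvr2 : v (r ^ 2) = 1 := by rw [map_pow, hvr, one_pow]
    -- Step 1: v (r + 1) ≤ oo (-1)
    have key1 : (r + 1) ^ 3 = ((3 + α) * r ^ 2 - α * r) + 3 * r * (r + 1) := by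
      linear_combination hroot
    have hvr1_le1 : v (r + 1) ≤ 1 := v.map_add_le hvr.le (by rw [map_one])
    have hb1 : v ((3 + α) * r ^ 2 - α * r) ≤ oo (-1) := by
      apply v.map_sub_le
      · rw [map_mul, hv3α, hvr2, mul_one]
      · rw [map_mul, hvα, hvr, mul_one]
    have hb2 : v (3 * r * (r + 1)) ≤ oo (-1) := by
      rw [map_mul, map_mul, h3', hvr, mul_one]
      calc oo (-1) * v (r + 1) ≤ oo (-1) * 1 := mul_le_mul_right hvr1_le1 _
        _ = oo (-1) := mul_one _
    have hcube : v (r + 1) ^ 3 ≤ oo (-1) := by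
      rw [← map_pow, key1]
      exact v.map_add_le hb1 hb2
    have hs : v (r + 1) ≤ oo (-1) := cube_le hcube
    -- Step 2: valuation of 3 + 2α is oo (-2), but the rest has valuation ≤ oo (-3)
    have key2 : (3 + 2 * α : K)
        = (r + 1) ^ 3 - (6 + α) * (r + 1) ^ 2 + (9 + 3 * α) * (r + 1) := by
      linear_combination -hroot
    have hv32α : v (3 + 2 * α) = oo (-2) := by
      have h9 : (3 : K) + 2 * α = 9 + 2 * γ ^ 3 := by rw [hα]; ring
      have h2γ : v (2 * γ ^ 3 : K) = oo (-3) := by rw [map_mul, hv2, hγ3, one_mul]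
      rw [h9, v.map_add_eq_of_lt_left (by rw [hv9, h2γ]; exact oo_lt.mpr (by norm_num)), hv9]
    have hv6α : v (6 + α) = oo (-2) := by
      have h9 : (6 : K) + α = 9 + γ ^ 3 := by rw [hα]; ring
      rw [h9, v.map_add_eq_of_lt_left (by rw [hv9, hγ3]; exact oo_lt.mpr (by norm_num)), hv9]
    have hv93α : v (9 + 3 * α) = oo (-2) := by
      have h18 : (9 : K) + 3 * α = 18 + 3 * γ ^ 3 := by rw [hα]; ring
      have hv18 : v (18 : K) = oo (-2) := by
        have : (18 : K) = 2 * 9 := by norm_num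
        rw [this, map_mul, hv2, hv9, one_mul]
      have h3γ : v (3 * γ ^ 3 : K) = oo (-4) := by
        rw [map_mul, h3', hγ3, oo_mul]; norm_num
      rw [h18, v.map_add_eq_of_lt_left (by rw [hv18, h3γ]; exact oo_lt.mpr (by norm_num)), hv18]
    have hbnd : v ((r + 1) ^ 3 - (6 + α) * (r + 1) ^ 2 + (9 + 3 * α) * (r + 1)) ≤ oo (-3) := by
      apply v.map_add_le
      · apply v.map_sub_le
        · rw [map_pow]
          calc v (r + 1) ^ 3 ≤ oo (-1) ^ 3 := pow_le_pow_left' hs 3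
            _ = oo (-3) := by rw [oo_cube]; norm_num
        · rw [map_mul, map_pow, hv6α]
          calc oo (-2) * v (r + 1) ^ 2 ≤ oo (-2) * oo (-1) ^ 2 :=
                mul_le_mul_right (pow_le_pow_left' hs 2) _
            _ = oo (-4) := by rw [oo_sq, oo_mul]; norm_num
            _ ≤ oo (-3) := oo_le.mpr (by norm_num)
      · rw [map_mul, hv93α]
        calc oo (-2) * v (r + 1) ≤ oo (-2) * oo (-1) := mul_le_mul_right hs _
          _ = oo (-3) := by rw [oo_mul]; norm_num
    rw [← key2, hv32α] at hbnd
    exact absurd (oo_le.mp hbnd) (by norm_num)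
  · -- a > 0 : r ^ 3 dominates
    have key : r ^ 3 = (3 + α) * r ^ 2 - α * r - 1 := by linear_combination hroot
    have hlt : v ((3 + α) * r ^ 2 - α * r - 1) < oo (3 * a) := by
      have h1 : v ((3 + α) * r ^ 2) < oo (3 * a) := by
        rw [map_mul, hv3α, hvr2, oo_mul]; exact oo_lt.mpr (by omega)
      have h2 : v (α * r) < oo (3 * a) := by
        rw [map_mul, hvα, hvr, oo_mul]; exact oo_lt.mpr (by omega)
      have h3 : v (1 : K) < oo (3 * a) := by
        rw [map_one, ← oo_zero]; exact oo_lt.mpr (by omega)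
      rw [sub_eq_add_neg, sub_eq_add_neg]
      exact v.map_add_lt (v.map_add_lt h1 (by rwa [v.map_neg])) (by rwa [v.map_neg])
    rw [← key, hvr3] at hlt
    exact lt_irrefl _ hlt
end

section
/- Let F be a field, let γ ∈ F satisfy γ³ − 6γ² + 3γ + 1 = 0, and let z, w ∈ F with z ≠ γ and w ≠ γ. Then (z − γ)³ (w − γ)³ · f( (γz + 1 − γ)/(z − γ), (γw + 1 − γ)/(w − γ) ) = 27 · (22γ² − 13γ − 4) · f(w, z). -/
set_option maxHeartbeats 1000000

/-- If `γ` is a root of `x³ − 6x² + 3x + 1` in a field `F`, and `z, w ∈ F` with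
`z ≠ γ`, `w ≠ γ`, then
`(z−γ)³(w−γ)³ · f((γz+1−γ)/(z−γ), (γw+1−γ)/(w−γ)) = 27(22γ² − 13γ − 4) · f(w,z)`. -/
theorem statement12 (F : Type*) [Field F] (γ : F)
    (hγ : γ ^ 3 - 6 * γ ^ 2 + 3 * γ + 1 = 0)
    (z w : F) (hz : z ≠ γ) (hw : w ≠ γ) :
    (z - γ) ^ 3 * (w - γ) ^ 3
        * fpoly ((γ * z + 1 - γ) / (z - γ)) ((γ * w + 1 - γ) / (w - γ)) =
      27 * (22 * γ ^ 2 - 13 * γ - 4) * fpoly w z := by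
  have hz' : z - γ ≠ 0 := sub_ne_zero.mpr hz
  have hw' : w - γ ≠ 0 := sub_ne_zero.mpr hw
  have ha : (γ * z + 1 - γ) / (z - γ) * (z - γ) = γ * z + 1 - γ :=
    div_mul_cancel₀ _ hz'
  have hb : (γ * w + 1 - γ) / (w - γ) * (w - γ) = γ * w + 1 - γ :=
    div_mul_cancel₀ _ hw'
  have key : (z - γ) ^ 3 * (w - γ) ^ 3
      * fpoly ((γ * z + 1 - γ) / (z - γ)) ((γ * w + 1 - γ) / (w - γ)) =
      ((γ * w + 1 - γ) / (w - γ) * (w - γ))^3*(z - γ)^3 + (-((γ * z + 1 - γ) / (z - γ) * (z - γ))^3 + 6*((γ * z + 1 - γ) / (z - γ) * (z - γ))^2*(z - γ) - 6*((γ * z + 1 - γ) / (z - γ) * (z - γ))*(z - γ)^2 - (z - γ)^3)*((γ * w + 1 - γ) / (w - γ) * (w - γ))^2*(w - γ) + (((γ * z + 1 - γ) / (z - γ) * (z - γ))^3 - 3*((γ * z + 1 - γ) / (z - γ) * (z - γ))^2*(z - γ) + 3*((γ * z + 1 - γ) / (z - γ) * (z - γ))*(z - γ)^2 + (z - γ)^3)*((γ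 * w + 1 - γ) / (w - γ) * (w - γ))*(w - γ)^2 - ((γ * z + 1 - γ) / (z - γ) * (z - γ))^3*(w - γ)^3 := by
    unfold fpoly; ring
  rw [ha, hb] at key
  rw [key]
  unfold fpoly
  linear_combination (γ + (-1)*γ^2 + (-1)*w + 3*w*γ^2 + (-1)*w*γ^3 + w^2 + (-3)*w^2*γ + w^2*γ^3 + (-109)*w^3 + (-20)*w^3*γ + (-4)*w^3*γ^2 + (-1)*w^3*γ^3 + 108*z + 21*z*γ + 6*z*γ^2 + 330*z*w + 54*z*w*γ + 9*z*w*γ^2 + 6*z*w*γ^3 + (-327)*z*w^2 + (-54)*z*w^2*γ + (-18)*z*w^2*γ^2 + (-3)*z*w^2*γ^3 + 108*z*w^3 + 21*z*w^3*γ + 6*z*w^3*γ^2 + (-108)*z^2 + (-24)*z^2*γ + (-3)*z^2*γ^2 + (-654)*z^2*w + (-117)*z^2*w*γ + (-27)*z^2*w*γ^2 + (-6)*z^2*w*γ^3 + 651*z^2*w^2 + 126*z^2*w^2*γ + 27*z^2*w^2*γ^2 + 3*z^2*w^2*γ^3 + (-108)*z^2*w^3 + (-24)*z^2*w^3*γ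 + (-3)*z^2*w^3*γ^2 + 109*z^3 + 22*z^3*γ + 2*z^3*γ^2 + z^3*γ^3 + (-1)*z^3*w + 3*z^3*w*γ^2 + (-1)*z^3*w*γ^3 + z^3*w^2 + (-3)*z^3*w^2*γ + z^3*w^2*γ^3 + z^3*w^3*γ + (-1)*z^3*w^3*γ^2) * hγ
end
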